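/- arXiv:1510.07936 — 3 statements merged into one kernel-verified Lean document; each statement's English description precedes it below -/
import Mathlib

section
/- For every integer n ≥ 2, the Bernoulli numbers satisfy the recursive relation Σ_{i=1}^{n−1} binomial(2n, 2i) · B_{2i} · B_{2n−2i} = −(2n+1) · B_{2n}. -/
open PowerSeries Finset

lemma exp_deriv : d⁄dX ℚ (exp ℚ) = exp ℚ := by
  ext n
  rw [coeff_derivative, coeff_exp, coeff_exp]
  simp [Nat.factorial_succ]
  field_simp

lemma ps_identity :
    bernoulliPowerSeries ℚ * bernoulliPowerSeries ℚ =
      bernoulliPowerSeries ℚ - X * bernoulliPowerSeries ℚ -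
        X * (d⁄dX ℚ (bernoulliPowerSeries ℚ)) := by
  set B := bernoulliPowerSeries ℚ with hB
  have h : B * (exp ℚ - 1) = X := bernoulliPowerSeries_mul_exp_sub_one ℚ
  have h2 : B * exp ℚ + (exp ℚ - 1) * d⁄dX ℚ B = 1 := by
    have := congrArg (d⁄dX ℚ) h
    rw [Derivation.leibniz, map_sub, exp_deriv, Derivation.map_one_eq_zero, derivative_X] at this
    simpa [smul_eq_mul, mul_comm] using this
  linear_combination B * h2 - (B + d⁄dX ℚ B) * h

lemma key (m : ℕ) :
    ∑ i ∈ range (m + 3), ((m + 2).choose i : ℚ) * bernoulli i * bernoulli (m + 2 - i) =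
      (1 - ((m : ℚ) + 2)) * bernoulli (m + 2) - ((m : ℚ) + 2) * bernoulli (m + 1) := by
  have h := congrArg (coeff (m + 2)) ps_identity
  rw [coeff_mul, Finset.Nat.sum_antidiagonal_eq_sum_range_succ_mk, map_sub, map_sub,
    coeff_succ_X_mul, coeff_succ_X_mul, coeff_derivative] at h
  simp only [bernoulliPowerSeries, coeff_mk, Algebra.algebraMap_self, map_div₀, RingHom.id_apply] at h
  simp only [Nat.succ_eq_add_one] at h
  have h' := congrArg (fun x : ℚ => ((m + 2).factorial : ℚ) * x) h
  simp only [Finset.mul_sum] at h'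
  have e1 : ∀ i ∈ range (m + 2 + 1),
      ((m + 2).factorial : ℚ) *
          (bernoulli i / (i.factorial : ℚ) * (bernoulli (m + 2 - i) / ((m + 2 - i).factorial : ℚ))) =
        ((m + 2).choose i : ℚ) * bernoulli i * bernoulli (m + 2 - i) := by
    intro i hi
    have hi' : i ≤ m + 2 := by simpa [Nat.lt_succ_iff] using Finset.mem_range.mp hi
    rw [Nat.cast_choose ℚ hi']
    have h1 : ((i.factorial : ℕ) : ℚ) ≠ 0 := Nat.cast_ne_zero.mpr (Nat.factorial_ne_zero _)
    have h2 : (((m + 2 - i).factorial : ℕ) : ℚ) ≠ 0 := Nat.cast_ne_zero.mpr (Nat.factorial_ne_zero _)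
    field_simp
  rw [Finset.sum_congr rfl e1] at h'
  rw [show m + 3 = m + 2 + 1 from rfl, h']
  have hf1 : (((m + 2).factorial : ℕ) : ℚ) ≠ 0 := Nat.cast_ne_zero.mpr (Nat.factorial_ne_zero _)
  have hf2 : (((m + 1).factorial : ℕ) : ℚ) ≠ 0 := Nat.cast_ne_zero.mpr (Nat.factorial_ne_zero _)
  have hrel : (((m + 2).factorial : ℕ) : ℚ) = ((m : ℚ) + 2) * ((m + 1).factorial : ℕ) := by
    rw [show m + 2 = (m + 1) + 1 from rfl, Nat.factorial_succ]
    push_cast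
    ring
  field_simp
  rw [hrel]
  push_cast
  ring

/-- **Bernoulli number recursion.** For every integer `n ≥ 2`, the Bernoulli numbers satisfy
`∑_{i=1}^{n-1} binom(2n, 2i) · B_{2i} · B_{2n-2i} = -(2n+1) · B_{2n}`. -/
theorem bernoulli_even_recursion (n : ℕ) (hn : 2 ≤ n) :
    ∑ i ∈ Finset.Ico 1 n,
        ((2 * n).choose (2 * i) : ℚ) * bernoulli (2 * i) * bernoulli (2 * n - 2 * i) =
      -(2 * (n : ℚ) + 1) * bernoulli (2 * n) := by
  set f : ℕ → ℚ := fun k => ((2 * n).choose k : ℚ) * bernoulli k * bernoulli (2 * n - k) with hf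
  have hodd : ∀ k, Odd k → k ≤ 2 * n → f k = 0 := by
    intro k hk hkle
    rcases eq_or_lt_of_le (show 1 ≤ k from hk.pos) with h1 | h1
    · have : bernoulli (2 * n - k) = 0 := by
        rw [← h1]
        rw [bernoulli_eq_bernoulli'_of_ne_one (by omega)]
        exact bernoulli'_eq_zero_of_odd ⟨n - 1, by omega⟩ (by omega)
      simp [hf, this]
    · have : bernoulli k = 0 := by
        rw [bernoulli_eq_bernoulli'_of_ne_one (by omega)]
        exact bernoulli'_eq_zero_of_odd hk h1
      simp [hf, this]
  have hfull : ∑ k ∈ range (2 * n + 1), f k =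
      (1 - (2 * (n : ℚ))) * bernoulli (2 * n) - (2 * (n : ℚ)) * bernoulli (2 * n - 1) := by
    have := key (2 * n - 2)
    have h2 : 2 * n - 2 + 2 = 2 * n := by omega
    have h3 : 2 * n - 2 + 3 = 2 * n + 1 := by omega
    have h4 : 2 * n - 2 + 1 = 2 * n - 1 := by omega
    rw [h2, h3, h4] at this
    rw [this]
    have : ((2 * n - 2 : ℕ) : ℚ) = 2 * n - 2 := by
      push_cast [Nat.cast_sub (by omega : 2 ≤ 2 * n)]; ring
    rw [this]; ring
  -- restrict full sum to even indices
  have himg : ∑ k ∈ range (2 * n + 1), f k = ∑ i ∈ range (n + 1), f (2 * i) := by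
    have hinj : ∀ a ∈ range (n + 1), ∀ b ∈ range (n + 1), 2 * a = 2 * b → a = b := by
      intro a _ b _ h; omega
    have him2 : ∑ i ∈ range (n + 1), f (2 * i) =
        ∑ k ∈ (range (n + 1)).image (fun i => 2 * i), f k :=
      (Finset.sum_image hinj).symm
    rw [him2]
    apply (Finset.sum_subset ?_ ?_).symm
    · intro k hk
      simp only [Finset.mem_image, Finset.mem_range] at hk ⊢
      obtain ⟨i, hi, rfl⟩ := hk
      omega
    · intro k hk hk'
      simp only [Finset.mem_image, Finset.mem_range] at hk hk'
      apply hodd k ?_ (by omega)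
      rcases Nat.even_or_odd k with he | ho
      · exfalso; obtain ⟨j, hj⟩ := he; exact hk' ⟨j, by omega, by omega⟩
      · exact ho
  have hsplit : ∑ i ∈ range (n + 1), f (2 * i) =
      f 0 + (∑ i ∈ Finset.Ico 1 n, f (2 * i)) + f (2 * n) := by
    rw [Finset.sum_range_succ, Finset.range_eq_Ico,
      Finset.sum_eq_sum_Ico_succ_bot (by omega : 0 < n)]
  have hf0 : f 0 = bernoulli (2 * n) := by simp [hf]
  have hf2n : f (2 * n) = bernoulli (2 * n) := by simp [hf]
  have hb : bernoulli (2 * n - 1) = 0 := by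
    rw [bernoulli_eq_bernoulli'_of_ne_one (by omega)]
    exact bernoulli'_eq_zero_of_odd ⟨n - 1, by omega⟩ (by omega)
  have : ∑ i ∈ Finset.Ico 1 n, f (2 * i) =
      (1 - (2 * (n : ℚ))) * bernoulli (2 * n) - 2 * bernoulli (2 * n) := by
    have := hfull
    rw [himg, hsplit, hf0, hf2n, hb] at this
    linarith
  calc ∑ i ∈ Finset.Ico 1 n,
        ((2 * n).choose (2 * i) : ℚ) * bernoulli (2 * i) * bernoulli (2 * n - 2 * i)
      = ∑ i ∈ Finset.Ico 1 n, f (2 * i) := by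
        apply Finset.sum_congr rfl; intro i _; simp [hf]
    _ = -(2 * (n : ℚ) + 1) * bernoulli (2 * n) := by rw [this]; ring
end

section
/- Let k ≥ 1 and let n_1, …, n_k be positive integers. Then, summing over all permutations σ of {1,…,k}: Σ_{σ ∈ S_k} ∏_{i=1}^{k} (n_{σ(1)} + n_{σ(2)} + ⋯ + n_{σ(i)})^{-1} = (1/k!) · Σ_{σ ∈ S_k} ∏_{i=1}^{k} (n_{σ(i)})^{-1}, an equality of rational numbers. (Equivalently, the left-hand side equals ∏_{i=1}^k 1/n_i.) -/
open Finset

private lemma Iic_castSucc' {k : ℕ} (i : Fin k) :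
    Finset.Iic (i.castSucc) = (Finset.Iic i).map Fin.castSuccEmb := by
  ext j
  simp only [Finset.mem_Iic, Finset.mem_map, Fin.le_def,
    Fin.coe_castSucc, Fin.castSuccEmb, Function.Embedding.coeFn_mk]
  constructor
  · intro h
    exact ⟨⟨j, lt_of_le_of_lt h i.isLt⟩, h, by ext; simp⟩
  · rintro ⟨a, ha, rfl⟩
    simpa using ha

private def toPerm {k : ℕ} (j : Fin (k + 1)) (π : Equiv.Perm (Fin k)) :
    Equiv.Perm (Fin (k + 1)) :=
  ((finSuccEquiv' (Fin.last k)).trans π.optionCongr).trans (finSuccEquiv' j).symm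

private lemma toPerm_apply_castSucc {k : ℕ} (j : Fin (k + 1)) (π : Equiv.Perm (Fin k))
    (i : Fin k) : toPerm j π (i.castSucc) = j.succAbove (π i) := by
  simp [toPerm, finSuccEquiv'_last_apply_castSucc]

private lemma toPerm_apply_last {k : ℕ} (j : Fin (k + 1)) (π : Equiv.Perm (Fin k)) :
    toPerm j π (Fin.last k) = j := by
  simp [toPerm]

private lemma toPerm_bijective {k : ℕ} :
    Function.Bijective (fun p : Fin (k + 1) × Equiv.Perm (Fin k) => toPerm p.1 p.2) := by
  rw [Fintype.bijective_iff_injective_and_card]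
  refine ⟨?_, by simp [Fintype.card_perm, Nat.factorial_succ, mul_comm]⟩
  rintro ⟨j, π⟩ ⟨j', π'⟩ h
  simp only at h
  have hj : j = j' := by
    have := congrArg (fun σ : Equiv.Perm (Fin (k+1)) => σ (Fin.last k)) h
    simpa [toPerm_apply_last] using this
  subst hj
  have hπ : π = π' := by
    refine Equiv.ext fun i => ?_
    have := congrArg (fun σ : Equiv.Perm (Fin (k+1)) => σ (i.castSucc)) h
    simp only [toPerm_apply_castSucc] at this
    exact Fin.succAbove_right_injective this
  rw [hπ]

private lemma sum_perm_aux : ∀ (k : ℕ) (f : Fin k → ℚ), (∀ i, 0 < f i) →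
    (∑ σ : Equiv.Perm (Fin k), ∏ i : Fin k, (∑ j ∈ Finset.Iic i, f (σ j))⁻¹) =
      ∏ i : Fin k, (f i)⁻¹ := by
  intro k
  induction k with
  | zero => intro f _; simp
  | succ k ih =>
    intro f hf
    have hS : (0 : ℚ) < ∑ i, f i :=
      Finset.sum_pos (fun i _ => hf i) ⟨⟨0, Nat.succ_pos k⟩, Finset.mem_univ _⟩
    rw [← Function.Bijective.sum_comp toPerm_bijective
      (fun σ => ∏ i : Fin (k+1), (∑ j ∈ Finset.Iic i, f (σ j))⁻¹)]
    rw [Fintype.sum_prod_type]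
    have key : ∀ (j : Fin (k+1)) (π : Equiv.Perm (Fin k)),
        (∏ i : Fin (k+1), (∑ j' ∈ Finset.Iic i, f (toPerm j π j'))⁻¹) =
        (∏ i : Fin k, (∑ j' ∈ Finset.Iic i, (f ∘ j.succAbove) (π j'))⁻¹) * (∑ i, f i)⁻¹ := by
      intro j π
      rw [Fin.prod_univ_castSucc]
      congr 1
      · refine Finset.prod_congr rfl fun i _ => ?_
        congr 1
        rw [Iic_castSucc', Finset.sum_map]
        refine Finset.sum_congr rfl fun a _ => ?_
        have : (Fin.castSuccEmb a : Fin (k+1)) = a.castSucc := rfl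
        rw [this, toPerm_apply_castSucc]
        rfl
      · congr 1
        have huniv : Finset.Iic (Fin.last k) = Finset.univ := by
          ext x; simp [Fin.le_last]
        rw [huniv]
        exact Equiv.sum_comp (toPerm j π) f
    calc (∑ j : Fin (k+1), ∑ π : Equiv.Perm (Fin k),
            ∏ i : Fin (k+1), (∑ j' ∈ Finset.Iic i, f (toPerm j π j'))⁻¹)
        = ∑ j : Fin (k+1), (∏ i : Fin k, (f (j.succAbove i))⁻¹) * (∑ i, f i)⁻¹ := by
          refine Finset.sum_congr rfl fun j _ => ?_
          rw [show (∑ π : Equiv.Perm (Fin k),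
              ∏ i : Fin (k+1), (∑ j' ∈ Finset.Iic i, f (toPerm j π j'))⁻¹)
            = ∑ π : Equiv.Perm (Fin k),
              (∏ i : Fin k, (∑ j' ∈ Finset.Iic i, (f ∘ j.succAbove) (π j'))⁻¹) * (∑ i, f i)⁻¹
            from Finset.sum_congr rfl fun π _ => key j π]
          rw [← Finset.sum_mul, ih (f ∘ j.succAbove) (fun i => hf _)]
          rfl
      _ = ∏ i : Fin (k+1), (f i)⁻¹ := by
          have hprod : ∀ j : Fin (k+1),
              (∏ i : Fin k, (f (j.succAbove i))⁻¹) = f j * ∏ i : Fin (k+1), (f i)⁻¹ := by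
            intro j
            have := Fin.prod_univ_succAbove (fun i => (f i)⁻¹) j
            rw [this, ← mul_assoc, mul_inv_cancel₀ (hf j).ne', one_mul]
          rw [show (∑ j : Fin (k+1), (∏ i : Fin k, (f (j.succAbove i))⁻¹) * (∑ i, f i)⁻¹)
            = ∑ j : Fin (k+1), f j * (∏ i : Fin (k+1), (f i)⁻¹) * (∑ i, f i)⁻¹
            from Finset.sum_congr rfl fun j _ => by rw [hprod j]]
          rw [← Finset.sum_mul, ← Finset.sum_mul]
          have hP : (∏ i : Fin (k+1), f i) ≠ 0 :=
            (Finset.prod_pos fun i _ => hf i).ne'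
          rw [mul_assoc, mul_comm (∏ i : Fin (k+1), (f i)⁻¹), ← mul_assoc,
            mul_inv_cancel₀ hS.ne', one_mul]

/-- For positive integers `n 1, …, n k`, summing over all permutations `σ` of `{1,…,k}`:
`∑_σ ∏_{i=1}^k (n_{σ(1)} + ⋯ + n_{σ(i)})⁻¹ = (1/k!) ∑_σ ∏_{i=1}^k (n_{σ(i)})⁻¹`,
and equivalently both sides equal `∏_{i=1}^k (n_i)⁻¹`. -/
theorem sum_perm_inv_partial_sums (k : ℕ) (hk : 1 ≤ k) (n : Fin k → ℕ)
    (hn : ∀ i, 0 < n i) :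
    (∑ σ : Equiv.Perm (Fin k), ∏ i : Fin k,
        (∑ j ∈ Finset.Iic i, (n (σ j) : ℚ))⁻¹) =
      (1 / (k.factorial : ℚ)) * ∑ σ : Equiv.Perm (Fin k), ∏ i : Fin k, ((n (σ i) : ℚ))⁻¹ ∧
    (∑ σ : Equiv.Perm (Fin k), ∏ i : Fin k,
        (∑ j ∈ Finset.Iic i, (n (σ j) : ℚ))⁻¹) =
      ∏ i : Fin k, ((n i : ℚ))⁻¹ := by
  have hf : ∀ i, (0 : ℚ) < (n i : ℚ) := fun i => by exact_mod_cast hn i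
  have h2 := sum_perm_aux k (fun i => (n i : ℚ)) hf
  beta_reduce at h2
  refine ⟨?_, h2⟩
  have hterm : ∀ σ : Equiv.Perm (Fin k),
      (∏ i : Fin k, ((n (σ i) : ℚ))⁻¹) = ∏ i : Fin k, ((n i : ℚ))⁻¹ :=
    fun σ => Equiv.prod_comp σ fun i => ((n i : ℚ))⁻¹
  rw [Finset.sum_congr rfl fun σ _ => hterm σ, Finset.sum_const, Finset.card_univ,
    Fintype.card_perm, nsmul_eq_mul, h2, one_div, Fintype.card_fin, ← mul_assoc,
    inv_mul_cancel₀ (show ((k.factorial : ℚ)) ≠ 0 by exact_mod_cast Nat.factorial_ne_zero k),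
    one_mul]
end

section
/- In the ring of formal power series ℚ⟦X⟧, let A = Σ_{n≥0} (B'_n / n!) X^n be the exponential generating series of the Bernoulli numbers with the convention B'_1 = +1/2 (so that A·(exp X − 1) = X·exp X, i.e., A represents x/(1 − e^{−x})), and let L = −Σ_{n≥1} (B_n / (n · n!)) X^n, where B_n are the Bernoulli numbers with the convention B_1 = −1/2. Then A has constant term 1, L has constant term 0, and the formal derivative satisfies D(A) = A · D(L); that is, L is a formal logarithm of A, encoding the power series expansion ln(x/(1 − e^{−x})) = −Σ_{n≥1} B_n x^n/(n · n!). -/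
open PowerSeries

/-- In `ℚ⟦X⟧`, let `A = ∑_{n≥0} (B'_n/n!) Xⁿ` (Bernoulli numbers with `B'_1 = +1/2`, so that
`A·(exp X − 1) = X·exp X`, i.e. `A` represents `x/(1−e^{−x})`), and let
`L = −∑_{n≥1} (B_n/(n·n!)) Xⁿ` (with `B_1 = −1/2`).  Then `A` has constant term `1`, `L` has
constant term `0`, and `D(A) = A · D(L)`; i.e. `L` is a formal logarithm of `A`, encoding
`ln(x/(1−e^{−x})) = −∑_{n≥1} B_n xⁿ/(n·n!)`. -/
theorem todd_log_power_series :
    let A : PowerSeries ℚ := PowerSeries.mk fun n => bernoulli' n / n.factorial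
    let L : PowerSeries ℚ := PowerSeries.mk fun n =>
      if n = 0 then 0 else -(bernoulli n / (n * n.factorial))
    PowerSeries.constantCoeff A = 1 ∧
    PowerSeries.constantCoeff L = 0 ∧
    A * (PowerSeries.exp ℚ - 1) = PowerSeries.X * PowerSeries.exp ℚ ∧
    PowerSeries.derivative ℚ A = A * PowerSeries.derivative ℚ L := by
  intro A L
  have hA : A = bernoulli'PowerSeries ℚ := by
    ext n; simp [A, bernoulli'PowerSeries]
  have h1 : A * (exp ℚ - 1) = X * exp ℚ := by
    rw [hA]; exact bernoulli'PowerSeries_mul_exp_sub_one ℚ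
  have hexp : derivative ℚ (exp ℚ) = exp ℚ := by
    ext n
    rw [coeff_derivative, coeff_exp, coeff_exp]
    have : ((n + 1 : ℕ) : ℚ) ≠ 0 := by exact_mod_cast Nat.succ_ne_zero n
    simp only [Algebra.algebraMap_self, RingHom.id_apply]
    field_simp [Nat.factorial_succ]
    push_cast [Nat.factorial_succ]; ring
  have hL : X * derivative ℚ L = 1 - bernoulliPowerSeries ℚ := by
    ext n
    cases n with
    | zero => simp [bernoulliPowerSeries]
    | succ m =>
      rw [coeff_succ_X_mul, coeff_derivative]
      simp only [bernoulliPowerSeries, map_sub, coeff_mk, coeff_one, L,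
        Nat.succ_ne_zero, if_false, Algebra.algebraMap_self, RingHom.id_apply]
      have h0 : ((m + 1 : ℕ) : ℚ) ≠ 0 := by exact_mod_cast Nat.succ_ne_zero m
      have h1 : ((m + 1).factorial : ℚ) ≠ 0 := by exact_mod_cast (m+1).factorial_ne_zero
      push_cast
      field_simp
      ring
  have hB : bernoulliPowerSeries ℚ * (exp ℚ - 1) = X := bernoulliPowerSeries_mul_exp_sub_one ℚ
  -- differentiate h1
  have h2 : derivative ℚ A * (exp ℚ - 1) + A * exp ℚ = exp ℚ + X * exp ℚ := by
    have h := congrArg (derivative ℚ) h1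
    rw [Derivation.leibniz, Derivation.leibniz, map_sub, hexp, derivative_X, Derivation.map_one_eq_zero] at h
    simp only [smul_eq_mul] at h
    linear_combination h
  have key : derivative ℚ A * (X * (exp ℚ - 1)) = A * derivative ℚ L * (X * (exp ℚ - 1)) := by
    have e1 : A * derivative ℚ L * (X * (exp ℚ - 1)) = A * (exp ℚ - 1) - A * X := by
      calc A * derivative ℚ L * (X * (exp ℚ - 1))
          = A * ((X * derivative ℚ L) * (exp ℚ - 1)) := by ring
        _ = A * ((1 - bernoulliPowerSeries ℚ) * (exp ℚ - 1)) := by rw [hL]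
        _ = A * (exp ℚ - 1) - A * (bernoulliPowerSeries ℚ * (exp ℚ - 1)) := by ring
        _ = A * (exp ℚ - 1) - A * X := by rw [hB]
    rw [e1, h1]
    have e2 : derivative ℚ A * (X * (exp ℚ - 1)) = X * (derivative ℚ A * (exp ℚ - 1)) := by ring
    rw [e2]
    have e3 : derivative ℚ A * (exp ℚ - 1) = exp ℚ + X * exp ℚ - A * exp ℚ := by
      linear_combination h2
    rw [e3]
    have e4 : A * exp ℚ = (X * exp ℚ) + A := by
      have : A * (exp ℚ - 1) = X * exp ℚ := h1
      linear_combination this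
    rw [e4]
    ring
  have hXne : (X * (exp ℚ - 1) : ℚ⟦X⟧) ≠ 0 := by
    intro h
    rcases mul_eq_zero.mp h with h' | h'
    · exact X_ne_zero h'
    · have := congrArg (coeff 1) h'
      simp [coeff_exp, Nat.factorial] at this
  refine ⟨by simp [A], by simp [L], h1, mul_right_cancel₀ hXne key⟩
end
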